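/- Let (P₀,…,P₈) be the symmetric Clifford system on ℝ¹⁶ arising from the octonions (via the Clifford algebra (E₁,…,E₇) on ℝ⁸ with ⟨u,v⟩² + Σ_{α=1}^7⟨E_αu,v⟩² = |u|²|v|²). Then Σ_{α=0}^8 ⟨P_αx,x⟩² = |x|⁴ for all x ∈ ℝ¹⁶. -/

import Mathlib

open Matrix

namespace Matrix

variable {m n R : Type*} [Fintype m] [Fintype n] [CommRing R]

theorem fromBlocks_mulVec_sumElim_dotProduct_sumElim (A : Matrix m m R) (B : Matrix m n R)
    (C : Matrix n m R) (D : Matrix n n R) (u : m → R) (v : n → R) :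
    fromBlocks A B C D *ᵥ Sum.elim u v ⬝ᵥ Sum.elim u v
      = A *ᵥ u ⬝ᵥ u + B *ᵥ v ⬝ᵥ u + (C *ᵥ u ⬝ᵥ v + D *ᵥ v ⬝ᵥ v) := by
  simp only [fromBlocks_mulVec, sumElim_dotProduct_sumElim, add_dotProduct, Sum.elim_comp_inl,
    Sum.elim_comp_inr]

theorem mulVec_dotProduct_eq_neg_of_transpose_eq_neg {A : Matrix n n R} (hA : Aᵀ = -A)
    (u v : n → R) : A *ᵥ u ⬝ᵥ v = -(A *ᵥ v ⬝ᵥ u) := by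
  rw [dotProduct_comm, dotProduct_mulVec, ← mulVec_transpose, hA, neg_mulVec, neg_dotProduct]

theorem fromBlocks_zero_neg_mulVec_sumElim_dotProduct_sumElim {A : Matrix n n R} (hA : Aᵀ = -A)
    (u v : n → R) :
    fromBlocks 0 A (-A) 0 *ᵥ Sum.elim u v ⬝ᵥ Sum.elim u v = 2 * (A *ᵥ v ⬝ᵥ u) := by
  rw [fromBlocks_mulVec_sumElim_dotProduct_sumElim, neg_mulVec, neg_dotProduct,
    mulVec_dotProduct_eq_neg_of_transpose_eq_neg hA u v]
  simp only [zero_mulVec, zero_dotProduct]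
  ring

end Matrix

theorem stmt15 (E : Fin 7 → Matrix (Fin 8) (Fin 8) ℝ)
    (hskew : ∀ α, (E α)ᵀ = -E α)
    (hoct : ∀ u v : Fin 8 → ℝ,
        (u ⬝ᵥ v) ^ 2 + ∑ α, ((E α).mulVec u ⬝ᵥ v) ^ 2 = (u ⬝ᵥ u) * (v ⬝ᵥ v)) :
    ∀ x : Fin 8 ⊕ Fin 8 → ℝ,
      ((fromBlocks 1 0 0 (-1)).mulVec x ⬝ᵥ x) ^ 2
        + ((fromBlocks 0 1 1 0).mulVec x ⬝ᵥ x) ^ 2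
        + ∑ α, ((fromBlocks 0 (E α) (-(E α)) 0).mulVec x ⬝ᵥ x) ^ 2
      = (x ⬝ᵥ x) ^ 2 := by
  intro x
  obtain ⟨u, v, rfl⟩ : ∃ u v, x = Sum.elim u v :=
    ⟨x ∘ Sum.inl, x ∘ Sum.inr, by funext s; cases s <;> rfl⟩
  simp only [fromBlocks_zero_neg_mulVec_sumElim_dotProduct_sumElim (hskew _),
    fromBlocks_mulVec_sumElim_dotProduct_sumElim, sumElim_dotProduct_sumElim, one_mulVec,
    zero_mulVec, neg_mulVec, zero_dotProduct, neg_dotProduct, mul_pow, ← Finset.mul_sum]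
  rw [dotProduct_comm u v]
  -- (|u|² - |v|²)² + 4 (⟨u,v⟩² + Σ ⟨E_α v, u⟩²) = (|u|² - |v|²)² + 4 |u|²|v|² = (|u|² + |v|²)²
  linear_combination 4 * hoct v u
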